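/- Let d, s², k be rationals with k > 0, and set H = (d² - s²)/k (the Harbourne constant of a curve of degree d through a weighted cluster of self-intersection s² with k points). For an integer m ≥ 1 with -m² < H < 0, the quantity H' = (m²·k·H - m²)/(m²·k + 1) satisfies H' < H. -/
import Mathlib

/-- The Kummer-cover modification `H' = (m²kH - m²)/(m²k + 1)` of a Harbourne
constant `H = (d² - s²)/k` with `-m² < H < 0` is strictly smaller than `H`. -/
theorem stmt_3 (d s2 k : ℚ) (hk : 0 < k) (m : ℤ) (hm : 1 ≤ m)
    (H : ℚ) (hH : H = (d ^ 2 - s2) / k)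
    (hlow : -(m : ℚ) ^ 2 < H) (hneg : H < 0) :
    ((m : ℚ) ^ 2 * k * H - (m : ℚ) ^ 2) / ((m : ℚ) ^ 2 * k + 1) < H := by
  have hm' : (1 : ℚ) ≤ (m : ℚ) := by exact_mod_cast hm
  have hpos : 0 < (m : ℚ) ^ 2 * k + 1 := by positivity
  rw [div_lt_iff₀ hpos]
  nlinarith
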